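/- arXiv:1207.6765 — 4 statements merged into one kernel-verified Lean document; each statement's English description precedes it below -/
import Mathlib

section
/- Let Γ be a signed graph of order n with no isolated vertex and with rank(A(Γ)) ≤ 3. Fix any vertex x of Γ, let Y = N(x) be the neighborhood of x and X = V(Γ) \ Y. Then no two vertices of X are adjacent in Γ. -/
/- The adjacency matrix of a signed graph `(G, σ)`: the `(u,v)` entry is `σ u v`
if `uv` is an edge of `G`, and `0` otherwise. -/
open Classical in
noncomputable def signedAdj {V : Type*} (G : SimpleGraph V) (σ : V → V → ℝ) :
    Matrix V V ℝ :=
  Matrix.of fun u v => if G.Adj u v then σ u v else 0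

/-- The sign of a walk: the product of the signs of its edges. -/
def walkSign {V : Type*} {G : SimpleGraph V} (σ : V → V → ℝ) {u v : V}
    (p : G.Walk u v) : ℝ :=
  (p.darts.map fun d => σ d.toProd.1 d.toProd.2).prod

/-- A signed graph is balanced if every cycle is positive. -/
def IsBalanced {V : Type*} (G : SimpleGraph V) (σ : V → V → ℝ) : Prop :=
  ∀ (u : V) (c : G.Walk u u), c.IsCycle → walkSign σ c = 1

/-! Let `x ~ y` and `u ~ v` be edges with `x` adjacent to neither `u` nor `v`. On the vertices
`x, y, u, v` the adjacency matrix has the shape below, whose determinant is the product of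
the four entries of the perfect matching `{xy, uv}`; so this principal submatrix is
nonsingular and the rank of `A(Γ)` is at least `4`. Taking for `y` any neighbour of `x` shows
that rank `≤ 3` forbids an edge `uv` outside `N(x)`. -/

lemma det_pendant_triangle {R : Type*} [CommRing R] (a a' b b' c c' d d' : R) :
    Matrix.det !![0, a, 0, 0; a', 0, b, c; 0, b', 0, d; 0, c', d', 0] = a * a' * d * d' := by
  rw [Matrix.det_succ_row_zero, Fin.sum_univ_four]
  simp [Matrix.det_fin_three, Fin.succAbove, mul_assoc]

lemma signedAdj_submatrix_of_not_adj {V : Type*} (G : SimpleGraph V) (σ : V → V → ℝ)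
    {x y u v : V} (hxy : G.Adj x y) (huv : G.Adj u v) (hxu : ¬ G.Adj x u)
    (hxv : ¬ G.Adj x v) :
    (signedAdj G σ).submatrix ![x, y, u, v] ![x, y, u, v] =
      !![0, σ x y, 0, 0;
         σ y x, 0, signedAdj G σ y u, signedAdj G σ y v;
         0, signedAdj G σ u y, 0, σ u v;
         0, signedAdj G σ v y, σ v u, 0] := by
  ext i j
  fin_cases i <;> fin_cases j <;>
    simp [signedAdj, hxy, hxy.symm, huv, huv.symm, hxu, hxv, G.adj_comm u x, G.adj_comm v x]

lemma four_le_rank_signedAdj {V : Type*} [Fintype V] (G : SimpleGraph V) (σ : V → V → ℝ)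
    (hσ : ∀ u v, G.Adj u v → σ u v ≠ 0)
    {x y u v : V} (hxy : G.Adj x y) (huv : G.Adj u v) (hxu : ¬ G.Adj x u)
    (hxv : ¬ G.Adj x v) :
    4 ≤ (signedAdj G σ).rank := by
  have hdet : ((signedAdj G σ).submatrix ![x, y, u, v] ![x, y, u, v]).det ≠ 0 := by
    rw [signedAdj_submatrix_of_not_adj G σ hxy huv hxu hxv, det_pendant_triangle]
    exact mul_ne_zero (mul_ne_zero (mul_ne_zero (hσ _ _ hxy) (hσ _ _ hxy.symm))
      (hσ _ _ huv)) (hσ _ _ huv.symm)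
  have hB : ((signedAdj G σ).submatrix ![x, y, u, v] ![x, y, u, v]).rank = 4 := by
    rw [Matrix.rank_of_isUnit _ ((Matrix.isUnit_iff_isUnit_det _).2 hdet.isUnit)]
    simp
  exact hB ▸ Matrix.rank_submatrix_le _ _ _

theorem no_adj_in_complement_of_neighborhood_of_rank_le_three_general
    {V : Type*} [Fintype V] (G : SimpleGraph V) (σ : V → V → ℝ)
    (hsgn : ∀ u v, G.Adj u v → σ u v = 1 ∨ σ u v = -1)
    (hrank : (signedAdj G σ).rank ≤ 3)
    (hnoiso : ∀ w : V, ∃ z : V, G.Adj w z)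
    (x u v : V) (hu : u ∉ G.neighborSet x) (hv : v ∉ G.neighborSet x) :
    ¬ G.Adj u v := by
  intro huv
  obtain ⟨y, hxy⟩ := hnoiso x
  have hσ : ∀ u v, G.Adj u v → σ u v ≠ 0 := fun u v h => by
    rcases hsgn u v h with h | h <;> norm_num [h]
  have := four_le_rank_signedAdj G σ hσ hxy huv hu hv
  omega

/-- If a signed graph `Γ` has no isolated vertex and `rank A(Γ) ≤ 3`, then for
any vertex `x`, with `Y = N(x)` and `X = V \ Y`, no two vertices of `X` are
adjacent. -/
theorem no_adj_in_complement_of_neighborhood_of_rank_le_three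
    {V : Type*} [Fintype V] (G : SimpleGraph V) (σ : V → V → ℝ)
    (hsym : ∀ u v, σ u v = σ v u)
    (hsgn : ∀ u v, G.Adj u v → σ u v = 1 ∨ σ u v = -1)
    (hrank : (signedAdj G σ).rank ≤ 3)
    (hnoiso : ∀ w : V, ∃ z : V, G.Adj w z)
    (x u v : V) (hu : u ∉ G.neighborSet x) (hv : v ∉ G.neighborSet x) :
    ¬ G.Adj u v :=
  no_adj_in_complement_of_neighborhood_of_rank_le_three_general G σ hsgn hrank hnoiso x u v hu hv
end

section
/- Let Γ be a signed graph of order n ≥ 2. Then the nullity of Γ equals n − 2 (equivalently rank(A(Γ)) = 2) if and only if the non-isolated vertices of Γ induce a balanced complete bipartite signed graph; that is, Γ is the disjoint union of a balanced signed graph whose underlying graph is a complete bipartite graph K_{p,q} with p, q ≥ 1, together with some (possibly zero) isolated vertices. -/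
/-!
The adjacency matrix `A` of a signed graph is symmetric with zero diagonal. Such a matrix has
rank `2` exactly when `A = a bᵀ + b aᵀ` for two nonzero vectors `a`, `b` with disjoint supports:
if `A u₀ v₀ ≠ 0`, rows `u₀` and `v₀` are independent and so span the row space; writing row `w`
as `α w • A u₀ + β w • A v₀`, symmetry gives `A = A u₀ v₀ • (α βᵀ + β αᵀ)` and the zero diagonal
gives `2 α w β w = 0`. For
`A = A(Γ)` the supports `X`, `Y` of `a`, `b` are the parts of a complete bipartite graph carrying
all edges, and on them `σ x y = a x * b y`. In a complete bipartite signed graph, balance is the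
same as positivity of every 4-cycle `x y x' y'`, i.e. `σ x y σ x' y' = σ x y' σ x' y`, and this
identity lets one switch all signs to `+1`.
-/

namespace Matrix

open Submodule

variable {m n R K : Type*}

theorem rank_le_two_of_apply_eq_mul_add_mul [Fintype n] [CommRing R] [StrongRankCondition R]
    (A : Matrix m n R) (a b : m → R) (c d : n → R) (hA : ∀ i j, A i j = a i * c j + b i * d j) :
    A.rank ≤ 2 := by
  have hfactor : A = of (fun i k ↦ ![a i, b i] k) * of (fun k j ↦ ![c j, d j] k) := by
    ext i j
    simp [mul_apply, Fin.sum_univ_two, hA]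
  calc A.rank ≤ (of fun k j ↦ ![c j, d j] k).rank := hfactor ▸ rank_mul_le_right _ _
    _ ≤ Fintype.card (Fin 2) := rank_le_card_height _
    _ = 2 := Fintype.card_fin 2

theorem two_le_rank_of_minor_ne_zero [Fintype n] [CommRing R] [IsDomain R] (A : Matrix m n R)
    {i₁ i₂ : m} {j₁ j₂ : n} (h : A i₁ j₁ * A i₂ j₂ - A i₁ j₂ * A i₂ j₁ ≠ 0) : 2 ≤ A.rank := by
  have hminor : (A.submatrix ![i₁, i₂] ![j₁, j₂]).det ≠ 0 := by rwa [det_fin_two]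
  calc 2 = (A.submatrix ![i₁, i₂] ![j₁, j₂]).rank := by rw [rank_of_det_ne_zero hminor]; simp
    _ ≤ A.rank := rank_submatrix_le _ _ _

theorem row_mem_span_pair_of_rank_le_two [Fintype n] [Finite m] [Field K] {A : Matrix m n K}
    {i j : m} (hij : LinearIndependent K ![A i, A j]) (hA : A.rank ≤ 2) (k : m) :
    A k ∈ span K {A i, A j} := by
  have hle : span K {A i, A j} ≤ span K (Set.range A.row) :=
    span_le.mpr <| Set.insert_subset_iff.mpr ⟨subset_span ⟨i, rfl⟩,
      Set.singleton_subset_iff.mpr (subset_span ⟨j, rfl⟩)⟩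
  have hpair := finrank_span_eq_card hij
  rw [range_cons_cons_empty] at hpair
  have heq : span K {A i, A j} = span K (Set.range A.row) :=
    eq_of_le_of_finrank_le hle (by rw [← rank_eq_finrank_span_row, hpair]; simpa using hA)
  exact heq ▸ subset_span ⟨k, rfl⟩

theorem exists_apply_eq_mul_add_mul_of_rank_le_two [Fintype n] [Field K] [NeZero (2 : K)]
    {A : Matrix n n K} (hA : A.IsSymm) (hdiag : ∀ i, A i i = 0) (hrank : A.rank ≤ 2)
    {i j : n} (hij : A i j ≠ 0) :
    ∃ a b : n → K, (∀ k, a k * b k = 0) ∧ ∀ k l, A k l = a k * b l + b k * a l := by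
  have hindep : LinearIndependent K ![A i, A j] := by
    refine LinearIndependent.pair_iff.mpr fun s t hst ↦ ?_
    have hi := congrFun hst i
    have hj := congrFun hst j
    simp only [Pi.add_apply, Pi.smul_apply, smul_eq_mul, Pi.zero_apply, hdiag, hA.apply i j]
      at hi hj
    exact ⟨by simpa [hij] using hj, by simpa [hij] using hi⟩
  choose α β hαβ using fun k ↦ mem_span_pair.mp (row_mem_span_pair_of_rank_le_two hindep hrank k)
  have hrow (k l : n) : A k l = α k * A i l + β k * A j l := by
    rw [← hαβ k]; rfl
  have hA' (k l : n) : A k l = A i j * (α k * β l + β k * α l) := by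
    rw [hrow, ← hA.apply i l, ← hA.apply j l, hrow l i, hrow l j, hdiag, hdiag, hA.apply i j]
    ring
  have hdisj (k : n) : α k * β k = 0 := by
    have h := hA' k k
    rw [hdiag] at h
    have : A i j * 2 * (α k * β k) = 0 := by linear_combination -h
    simpa [hij, two_ne_zero] using this
  exact ⟨fun k ↦ A i j * α k, β, fun k ↦ by rw [mul_assoc, hdisj, mul_zero],
    fun k l ↦ by rw [hA']; ring⟩

theorem rank_eq_two_iff_of_isSymm [Fintype n] [Field K] [NeZero (2 : K)] {A : Matrix n n K}
    (hA : A.IsSymm) (hdiag : ∀ i, A i i = 0) :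
    A.rank = 2 ↔
      A ≠ 0 ∧ ∃ a b : n → K, (∀ k, a k * b k = 0) ∧ ∀ k l, A k l = a k * b l + b k * a l := by
  have exists_ne_zero (hA0 : A ≠ 0) : ∃ i j, A i j ≠ 0 := by
    by_contra! h
    exact hA0 (ext h)
  constructor
  · intro hrank
    have hA0 : A ≠ 0 := by
      rintro rfl
      simp at hrank
    obtain ⟨i, j, hij⟩ := exists_ne_zero hA0
    exact ⟨hA0, exists_apply_eq_mul_add_mul_of_rank_le_two hA hdiag hrank.le hij⟩
  · rintro ⟨hA0, a, b, -, hdecomp⟩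
    obtain ⟨i, j, hij⟩ := exists_ne_zero hA0
    have hminor : A i j * A j i - A i i * A j j ≠ 0 := by
      simpa [hdiag, hA.apply i j] using hij
    exact le_antisymm (rank_le_two_of_apply_eq_mul_add_mul A a b b a hdecomp)
      (two_le_rank_of_minor_ne_zero A hminor)

end Matrix

theorem mul_add_mul_ne_zero_iff {R : Type*} [Semiring R] [NoZeroDivisors R] {a b c d : R}
    (hab : a * b = 0) (hcd : c * d = 0) :
    a * d + b * c ≠ 0 ↔ (a ≠ 0 ∧ d ≠ 0) ∨ (b ≠ 0 ∧ c ≠ 0) := by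
  rcases mul_eq_zero.mp hab with rfl | rfl <;> rcases mul_eq_zero.mp hcd with rfl | rfl <;> simp

section SignedGraph

variable {V : Type*} {G : SimpleGraph V} {σ : V → V → ℝ}

open Classical in
theorem signedAdj_apply (u v : V) :
    signedAdj G σ u v = if G.Adj u v then σ u v else 0 := rfl

theorem signedAdj_apply_of_adj {u v : V} (h : G.Adj u v) : signedAdj G σ u v = σ u v := by
  simp [signedAdj_apply, h]

theorem signedAdj_apply_self (u : V) : signedAdj G σ u u = 0 := by
  simp [signedAdj_apply]

theorem signedAdj_isSymm (hsym : ∀ u v, σ u v = σ v u) : (signedAdj G σ).IsSymm :=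
  Matrix.IsSymm.ext fun u v ↦ by rw [signedAdj_apply, signedAdj_apply, G.adj_comm, hsym]

theorem signedAdj_ne_zero_iff (hsgn : ∀ u v, G.Adj u v → σ u v = 1 ∨ σ u v = -1) {u v : V} :
    signedAdj G σ u v ≠ 0 ↔ G.Adj u v := by
  by_cases h : G.Adj u v
  · rcases hsgn u v h with hs | hs <;> simp [signedAdj_apply, h, hs]
  · simp [signedAdj_apply, h]

theorem walkSign_eq_of_switching {τ : V → ℝ} (hτ : ∀ w, τ w ^ 2 = 1)
    (hσ : ∀ u v, G.Adj u v → σ u v = τ u * τ v) {u v : V} (p : G.Walk u v) :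
    walkSign σ p = τ u * τ v := by
  induction p with
  | nil => simp [walkSign, ← sq, hτ]
  | @cons u w v h q ih =>
    simp only [walkSign, SimpleGraph.Walk.darts_cons, List.map_cons, List.prod_cons] at ih ⊢
    rw [ih, hσ u w h]
    linear_combination τ u * τ v * hτ w

theorem isBalanced_of_switching {τ : V → ℝ} (hτ : ∀ w, τ w ^ 2 = 1)
    (hσ : ∀ u v, G.Adj u v → σ u v = τ u * τ v) : IsBalanced G σ :=
  fun u c _ ↦ by rw [walkSign_eq_of_switching hτ hσ c, ← sq, hτ]

theorem IsBalanced.sign_mul_sign_eq_swap (hbal : IsBalanced G σ) (hsym : ∀ u v, σ u v = σ v u)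
    (hsgn : ∀ u v, G.Adj u v → σ u v = 1 ∨ σ u v = -1) {x x' y y' : V}
    (hxy : G.Adj x y) (hxy' : G.Adj x y') (hx'y : G.Adj x' y) (hx'y' : G.Adj x' y') :
    σ x y * σ x' y' = σ x y' * σ x' y := by
  rcases eq_or_ne x x' with rfl | hx
  · ring
  rcases eq_or_ne y y' with rfl | hy
  · ring
  let c : G.Walk x x := .cons hxy (.cons hx'y.symm (.cons hx'y' (.cons hxy'.symm .nil)))
  have hc : c.IsCycle := by
    simp [c, SimpleGraph.Walk.cons_isCycle_iff, SimpleGraph.Walk.cons_isPath_iff, hx, hx.symm, hy,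
      hxy.ne, hxy.ne', hxy'.ne, hxy'.ne', hx'y.ne', hx'y'.ne]
  have hsign : σ x y * σ y x' * σ x' y' * σ y' x = 1 := by
    simpa [c, walkSign, mul_assoc] using hbal x c hc
  rw [hsym y x', hsym y' x] at hsign
  -- multiply `hsign` by `σ x' y * σ x y'`, whose factors square to `1`
  have h₁ : σ x' y ^ 2 = 1 := by rcases hsgn _ _ hx'y with h | h <;> simp [h]
  have h₂ : σ x y' ^ 2 = 1 := by rcases hsgn _ _ hxy' with h | h <;> simp [h]
  linear_combination σ x' y * σ x y' * hsign - σ x y * σ x' y' * (h₁ + σ x' y ^ 2 * h₂)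

variable {X Y : Set V}

theorem exists_switching_of_completeBipartite (hsym : ∀ u v, σ u v = σ v u)
    (hsgn : ∀ u v, G.Adj u v → σ u v = 1 ∨ σ u v = -1) (hXY : Disjoint X Y)
    (hG : ∀ u v, G.Adj u v ↔ (u ∈ X ∧ v ∈ Y) ∨ (u ∈ Y ∧ v ∈ X)) {x₀ y₀ : V}
    (hx₀ : x₀ ∈ X) (hy₀ : y₀ ∈ Y) (hswap : ∀ x ∈ X, ∀ y ∈ Y, σ x y * σ x₀ y₀ = σ x y₀ * σ x₀ y) :
    ∃ τ : V → ℝ, (∀ w, τ w ^ 2 = 1) ∧ ∀ u v, G.Adj u v → σ u v = τ u * τ v := by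
  classical
  have hsq (x : V) (hx : x ∈ X) (y : V) (hy : y ∈ Y) : σ x y ^ 2 = 1 := by
    rcases hsgn x y ((hG x y).mpr (.inl ⟨hx, hy⟩)) with h | h <;> simp [h]
  set τ : V → ℝ := fun w ↦ if w ∈ X then σ w y₀ * σ x₀ y₀ else if w ∈ Y then σ x₀ w else 1
  have hτ (x : V) (hx : x ∈ X) (y : V) (hy : y ∈ Y) : σ x y = τ x * τ y := by
    simp only [τ, if_pos hx, if_neg (Set.disjoint_right.mp hXY hy), if_pos hy]
    linear_combination σ x₀ y₀ * hswap x hx y hy - σ x y * hsq x₀ hx₀ y₀ hy₀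
  refine ⟨τ, fun w ↦ ?_, fun u v h ↦ ?_⟩
  · simp only [τ]
    split_ifs with hX hY
    · rw [mul_pow, hsq w hX y₀ hy₀, hsq x₀ hx₀ y₀ hy₀, one_mul]
    · exact hsq x₀ hx₀ w hY
    · exact one_pow 2
  · rcases (hG u v).mp h with ⟨hu, hv⟩ | ⟨hu, hv⟩
    · exact hτ u hu v hv
    · rw [hsym, hτ v hv u hu, mul_comm]

theorem isBalanced_and_completeBipartite_of_signedAdj_eq (hsym : ∀ u v, σ u v = σ v u)
    (hsgn : ∀ u v, G.Adj u v → σ u v = 1 ∨ σ u v = -1) {a b : V → ℝ} (hab : ∀ w, a w * b w = 0)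
    (hdecomp : ∀ u v, signedAdj G σ u v = a u * b v + b u * a v) (hA0 : signedAdj G σ ≠ 0) :
    IsBalanced G σ ∧
      ∃ X Y : Set V, X.Nonempty ∧ Y.Nonempty ∧ Disjoint X Y ∧
        ∀ u v : V, G.Adj u v ↔ (u ∈ X ∧ v ∈ Y) ∨ (u ∈ Y ∧ v ∈ X) := by
  set X := {w | a w ≠ 0}
  set Y := {w | b w ≠ 0}
  have hG (u v : V) : G.Adj u v ↔ (u ∈ X ∧ v ∈ Y) ∨ (u ∈ Y ∧ v ∈ X) := by
    rw [← signedAdj_ne_zero_iff hsgn, hdecomp]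
    exact mul_add_mul_ne_zero_iff (hab u) (hab v)
  have hXY : Disjoint X Y := Set.disjoint_left.mpr fun w ha hb ↦ mul_ne_zero ha hb (hab w)
  obtain ⟨x₀, y₀, hx₀, hy₀⟩ : ∃ x₀ y₀, x₀ ∈ X ∧ y₀ ∈ Y := by
    obtain ⟨u, v, huv⟩ : ∃ u v, signedAdj G σ u v ≠ 0 := by
      by_contra! h
      exact hA0 (Matrix.ext h)
    rcases (hG u v).mp ((signedAdj_ne_zero_iff hsgn).mp huv) with ⟨hu, hv⟩ | ⟨hu, hv⟩
    exacts [⟨u, v, hu, hv⟩, ⟨v, u, hv, hu⟩]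
  have hσ (x : V) (hx : x ∈ X) (y : V) (hy : y ∈ Y) : σ x y = a x * b y := by
    have hbx : b x = 0 := (mul_eq_zero.mp (hab x)).resolve_left hx
    rw [← signedAdj_apply_of_adj (σ := σ) ((hG x y).mpr (.inl ⟨hx, hy⟩)), hdecomp, hbx, zero_mul,
      add_zero]
  obtain ⟨τ, hτ, hστ⟩ := exists_switching_of_completeBipartite hsym hsgn hXY hG hx₀ hy₀
    fun x hx y hy ↦ by rw [hσ x hx y hy, hσ x hx y₀ hy₀, hσ x₀ hx₀ y hy, hσ x₀ hx₀ y₀ hy₀]; ring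
  exact ⟨isBalanced_of_switching hτ hστ, X, Y, ⟨x₀, hx₀⟩, ⟨y₀, hy₀⟩, hXY, hG⟩

theorem signedAdj_apply_eq_indicator_mul_add (hXY : Disjoint X Y)
    (hG : ∀ u v, G.Adj u v ↔ (u ∈ X ∧ v ∈ Y) ∨ (u ∈ Y ∧ v ∈ X)) {τ : V → ℝ}
    (hστ : ∀ u v, G.Adj u v → σ u v = τ u * τ v) (u v : V) :
    signedAdj G σ u v =
      X.indicator τ u * Y.indicator τ v + Y.indicator τ u * X.indicator τ v := by
  classical
  have hYX : ∀ ⦃w⦄, w ∈ Y → w ∉ X := Set.disjoint_right.mp hXY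
  simp only [signedAdj_apply, Set.indicator_apply]
  split_ifs <;> grind

end SignedGraph

theorem rank_eq_two_iff_balanced_complete_bipartite_general
    {V : Type*} [Fintype V] (G : SimpleGraph V) (σ : V → V → ℝ)
    (hsym : ∀ u v, σ u v = σ v u)
    (hsgn : ∀ u v, G.Adj u v → σ u v = 1 ∨ σ u v = -1) :
    (signedAdj G σ).rank = 2 ↔
      IsBalanced G σ ∧
        ∃ X Y : Set V, X.Nonempty ∧ Y.Nonempty ∧ Disjoint X Y ∧
          ∀ u v : V, G.Adj u v ↔ (u ∈ X ∧ v ∈ Y) ∨ (u ∈ Y ∧ v ∈ X) := by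
  rw [Matrix.rank_eq_two_iff_of_isSymm (signedAdj_isSymm hsym) signedAdj_apply_self]
  constructor
  · rintro ⟨hA0, a, b, hab, hdecomp⟩
    exact isBalanced_and_completeBipartite_of_signedAdj_eq hsym hsgn hab hdecomp hA0
  · rintro ⟨hbal, X, Y, ⟨x₀, hx₀⟩, ⟨y₀, hy₀⟩, hXY, hG⟩
    have hadj {x y : V} (hx : x ∈ X) (hy : y ∈ Y) : G.Adj x y := (hG x y).mpr (.inl ⟨hx, hy⟩)
    obtain ⟨τ, -, hστ⟩ := exists_switching_of_completeBipartite hsym hsgn hXY hG hx₀ hy₀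
      fun x hx y hy ↦ hbal.sign_mul_sign_eq_swap hsym hsgn (hadj hx hy) (hadj hx hy₀)
        (hadj hx₀ hy) (hadj hx₀ hy₀)
    refine ⟨fun h ↦ (signedAdj_ne_zero_iff hsgn).mpr (hadj hx₀ hy₀) (by rw [h]; rfl),
      X.indicator τ, Y.indicator τ, fun w ↦ ?_, signedAdj_apply_eq_indicator_mul_add hXY hG hστ⟩
    rw [← Set.inter_indicator_mul, hXY.inter_eq, Set.indicator_empty]

/-- A signed graph of order `n ≥ 2` has nullity `n - 2`, i.e. `rank A(Γ) = 2`,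
iff it is a balanced complete bipartite signed graph (with parts `X`, `Y`)
together with some isolated vertices (the vertices outside `X ∪ Y`). -/
theorem rank_eq_two_iff_balanced_complete_bipartite
    {V : Type*} [Fintype V] (G : SimpleGraph V) (σ : V → V → ℝ)
    (hsym : ∀ u v, σ u v = σ v u)
    (hsgn : ∀ u v, G.Adj u v → σ u v = 1 ∨ σ u v = -1)
    (hn : 2 ≤ Fintype.card V) :
    (signedAdj G σ).rank = 2 ↔
      IsBalanced G σ ∧
        ∃ X Y : Set V, X.Nonempty ∧ Y.Nonempty ∧ Disjoint X Y ∧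
          ∀ u v : V, G.Adj u v ↔ (u ∈ X ∧ v ∈ Y) ∨ (u ∈ Y ∧ v ∈ X) :=
  rank_eq_two_iff_balanced_complete_bipartite_general G σ hsym hsgn
end

section
/- Let Γ be a signed graph containing a special path P v₁v₂v₃ with σ(v₁v₂) = −1 and σ(v₂v₃) = +1, and let Γ′ be the signed graph obtained from Γ by contracting the path into a single vertex (i.e. deleting v₁ and v₂ and, for every neighbor v ≠ v₂ of v₁, adding the edge vv₃ with sign σ(vv₁)). Then η(Γ′) = η(Γ); equivalently, rank(A(Γ)) = rank(A(Γ′)) + 2. -/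
/-- The graph obtained from `G` by contracting a special path `P v₁ v₂ v₃` into
the single vertex `v₃`: delete `v₁` and `v₂`, and join `v₃` to every former
neighbor of `v₁` (other than `v₂`). -/
def contractSpecialPath {V : Type*} (G : SimpleGraph V) (v₁ v₂ v₃ : V)
    (h13 : ¬ G.Adj v₁ v₃) : SimpleGraph {w : V // w ≠ v₁ ∧ w ≠ v₂} where
  Adj a b := G.Adj a.1 b.1 ∨ (a.1 = v₃ ∧ G.Adj v₁ b.1) ∨ (b.1 = v₃ ∧ G.Adj v₁ a.1)
  symm := by
    constructor
    rintro a b (h | ⟨h1, h2⟩ | ⟨h1, h2⟩)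
    · exact Or.inl h.symm
    · exact Or.inr (Or.inr ⟨h1, h2⟩)
    · exact Or.inr (Or.inl ⟨h1, h2⟩)
  loopless := by
    constructor
    rintro a (h | ⟨h1, h2⟩ | ⟨h1, h2⟩)
    · exact G.loopless.irrefl _ h
    · rw [h1] at h2; exact h13 h2
    · rw [h1] at h2; exact h13 h2

/-!
Order the vertices as `v₁, v₂` followed by the rest. The principal block of `A(Γ)` on
`{v₁, v₂}` is `!![0, -1; -1, 0]`, which is invertible, so `rank A(Γ)` is `2` plus the rank of
its Schur complement. As `v₂` is adjacent only to `v₁` and to `v₃` (with sign `+1`), pivoting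
adds the row and column of `v₁` to those of `v₃`; because `v₁v₃` is not an edge and `v₁`, `v₃`
have no common neighbour besides `v₂`, the added entries land on non-edges, and the Schur
complement is exactly `A(Γ')`.
-/

theorem Submodule.finrank_prod {K M N : Type*} [Field K] [AddCommGroup M] [AddCommGroup N]
    [Module K M] [Module K N] [FiniteDimensional K M] [FiniteDimensional K N]
    (p : Submodule K M) (q : Submodule K N) :
    Module.finrank K (p.prod q) = Module.finrank K p + Module.finrank K q := by
  have hrange : (p.subtype.prodMap q.subtype).range = p.prod q := by simp
  rw [← hrange, LinearMap.finrank_range_of_inj, Module.finrank_prod]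
  exact p.injective_subtype.prodMap q.injective_subtype

namespace Matrix

variable {K m n : Type*} [Field K] [Fintype m] [Fintype n]

theorem rank_fromBlocks_zero₁₂_zero₂₁ (A : Matrix m m K) (D : Matrix n n K) :
    (fromBlocks A 0 0 D).rank = A.rank + D.rank := by
  classical
  let E := LinearEquiv.sumArrowLequivProdArrow m n K K
  have hfactor : (fromBlocks A 0 0 D).mulVecLin =
      E.symm.toLinearMap ∘ₗ A.mulVecLin.prodMap D.mulVecLin ∘ₗ E.toLinearMap := by
    refine LinearMap.ext fun x => funext fun i => ?_
    rcases i with i | i <;> simp [E, fromBlocks_mulVec] <;> rfl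
  rw [rank, hfactor, LinearMap.range_comp, LinearMap.range_comp_of_range_eq_top _ E.range,
    LinearEquiv.finrank_map_eq, LinearMap.range_prodMap, Submodule.finrank_prod]
  rfl

theorem rank_fromBlocks_of_invertible₁₁ [DecidableEq m] [DecidableEq n]
    (A : Matrix m m K) (B : Matrix m n K) (C : Matrix n m K) (D : Matrix n n K) [Invertible A] :
    (fromBlocks A B C D).rank = Fintype.card m + (D - C * ⅟A * B).rank := by
  have hL : IsUnit (fromBlocks (1 : Matrix m m K) 0 (C * ⅟A) 1).det := by simp
  have hU : IsUnit (fromBlocks (1 : Matrix m m K) (⅟A * B) 0 1).det := by simp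
  rw [fromBlocks_eq_of_invertible₁₁, rank_mul_eq_left_of_isUnit_det _ _ hU,
    rank_mul_eq_right_of_isUnit_det _ _ hL, rank_fromBlocks_zero₁₂_zero₂₁,
    rank_of_isUnit A (isUnit_of_invertible A)]

theorem rank_fromBlocks_antidiagNegOne [DecidableEq n]
    (B : Matrix (Fin 2) n K) (C : Matrix n (Fin 2) K) (D : Matrix n n K) :
    (fromBlocks !![0, -1; -1, 0] B C D).rank =
      2 + (of fun i j => D i j + C i 0 * B 1 j + C i 1 * B 0 j).rank := by
  have hsq : (!![0, -1; -1, 0] : Matrix (Fin 2) (Fin 2) K) * !![0, -1; -1, 0] = 1 := by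
    ext i j
    fin_cases i <;> fin_cases j <;> simp
  let _ : Invertible (!![0, -1; -1, 0] : Matrix (Fin 2) (Fin 2) K) := ⟨_, hsq, hsq⟩
  rw [rank_fromBlocks_of_invertible₁₁, invOf_eq_right_inv hsq, Fintype.card_fin]
  congr 3
  ext i j
  simp [mul_apply, Fin.sum_univ_two]
  ring

end Matrix

@[simps apply]
def Equiv.sumNePair {V : Type*} [DecidableEq V] {a b : V} (hab : a ≠ b) :
    Fin 2 ⊕ {w : V // w ≠ a ∧ w ≠ b} ≃ V where
  toFun := Sum.elim ![a, b] Subtype.val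
  invFun w := if ha : w = a then .inl 0 else if hb : w = b then .inl 1 else .inr ⟨w, ha, hb⟩
  left_inv := by
    rintro (i | ⟨w, ha, hb⟩)
    · fin_cases i <;> simp [hab.symm]
    · simp [ha, hb]
  right_inv w := by
    by_cases ha : w = a
    · simp [ha]
    · by_cases hb : w = b <;> simp [ha, hb, hab.symm]

open Classical in
noncomputable def contractSpecialPathSign {V : Type*} (G : SimpleGraph V) (σ : V → V → ℝ) (v₁ v₂ v₃ : V)
    (a b : {w : V // w ≠ v₁ ∧ w ≠ v₂}) : ℝ :=
  if a.1 = v₃ ∧ G.Adj v₁ b.1 then σ v₁ b.1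
  else if b.1 = v₃ ∧ G.Adj v₁ a.1 then σ v₁ a.1
  else σ a.1 b.1

section SpecialPath

variable {V : Type*} {G : SimpleGraph V} {σ : V → V → ℝ} {v₁ v₂ v₃ : V}

open Classical in
theorem signedAdj_comm (hsym : ∀ u v, σ u v = σ v u) (u v : V) :
    signedAdj G σ u v = signedAdj G σ v u := by
  simp only [signedAdj, Matrix.of_apply, hsym u v]
  exact if_congr (G.adj_comm u v) rfl rfl

open Classical in
theorem signedAdj_of_neighborSet_eq_pair (hdeg : G.neighborSet v₂ = {v₁, v₃})
    (hs23 : σ v₂ v₃ = 1) {x : V} (hx : x ≠ v₁) :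
    signedAdj G σ v₂ x = if x = v₃ then 1 else 0 := by
  have hadj : G.Adj v₂ x ↔ x = v₃ := by
    rw [← SimpleGraph.mem_neighborSet, hdeg]
    simp [hx]
  simp only [signedAdj, Matrix.of_apply, hadj]
  split_ifs with h
  · rw [h, hs23]
  · rfl

open Classical in
theorem signedAdj_submatrix_sumNePair_toBlocks₁₁ (hsym : ∀ u v, σ u v = σ v u)
    (h12 : G.Adj v₁ v₂) (hs12 : σ v₁ v₂ = -1) :
    ((signedAdj G σ).submatrix (Equiv.sumNePair h12.ne) (Equiv.sumNePair h12.ne)).toBlocks₁₁ =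
      !![0, -1; -1, 0] := by
  ext i j
  fin_cases i <;> fin_cases j <;>
    simp [Matrix.toBlocks₁₁, signedAdj, h12, h12.symm, hs12, hsym v₂ v₁]

theorem signedAdj_contractSpecialPath (hsym : ∀ u v, σ u v = σ v u)
    (hdeg : G.neighborSet v₂ = {v₁, v₃}) (h13 : ¬ G.Adj v₁ v₃)
    (hcommon : ∀ w : V, w ≠ v₂ → ¬ (G.Adj v₁ w ∧ G.Adj v₃ w)) (hs23 : σ v₂ v₃ = 1)
    (a b : {w : V // w ≠ v₁ ∧ w ≠ v₂}) :
    signedAdj (contractSpecialPath G v₁ v₂ v₃ h13) (contractSpecialPathSign G σ v₁ v₂ v₃) a b =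
      signedAdj G σ a b + signedAdj G σ a v₁ * signedAdj G σ v₂ b +
        signedAdj G σ a v₂ * signedAdj G σ v₁ b := by
  rw [signedAdj_comm hsym a v₁, signedAdj_comm hsym a v₂,
    signedAdj_of_neighborSet_eq_pair hdeg hs23 a.2.1,
    signedAdj_of_neighborSet_eq_pair hdeg hs23 b.2.1]
  have ha := hcommon a a.2.2
  have hb := hcommon b b.2.2
  simp only [signedAdj, contractSpecialPath, contractSpecialPathSign, Matrix.of_apply]
  split_ifs <;> grind [SimpleGraph.adj_comm, SimpleGraph.irrefl]

end SpecialPath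

open Classical in
theorem nullity_invariant_under_special_path_contraction_general
    {V : Type*} [Fintype V] (G : SimpleGraph V) (σ : V → V → ℝ)
    (hsym : ∀ u v, σ u v = σ v u)
    (v₁ v₂ v₃ : V)
    (h12 : G.Adj v₁ v₂)
    (hdeg : G.neighborSet v₂ = {v₁, v₃})
    (h13 : ¬ G.Adj v₁ v₃)
    (hcommon : ∀ w : V, w ≠ v₂ → ¬ (G.Adj v₁ w ∧ G.Adj v₃ w))
    (hs12 : σ v₁ v₂ = -1) (hs23 : σ v₂ v₃ = 1) :
    (signedAdj G σ).rank =
      (signedAdj (contractSpecialPath G v₁ v₂ v₃ h13)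
        (fun a b =>
          if a.1 = v₃ ∧ G.Adj v₁ b.1 then σ v₁ b.1
          else if b.1 = v₃ ∧ G.Adj v₁ a.1 then σ v₁ a.1
          else σ a.1 b.1)).rank + 2 := by
  set A := (signedAdj G σ).submatrix (Equiv.sumNePair h12.ne) (Equiv.sumNePair h12.ne)
  have hschur : signedAdj (contractSpecialPath G v₁ v₂ v₃ h13)
      (contractSpecialPathSign G σ v₁ v₂ v₃) = Matrix.of fun a b =>
        A.toBlocks₂₂ a b + A.toBlocks₂₁ a 0 * A.toBlocks₁₂ 1 b +
          A.toBlocks₂₁ a 1 * A.toBlocks₁₂ 0 b := by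
    ext a b
    exact signedAdj_contractSpecialPath hsym hdeg h13 hcommon hs23 a b
  calc (signedAdj G σ).rank = A.rank := (Matrix.rank_submatrix _ _ _).symm
    _ = (Matrix.fromBlocks !![0, -1; -1, 0] A.toBlocks₁₂ A.toBlocks₂₁ A.toBlocks₂₂).rank := by
      rw [← signedAdj_submatrix_sumNePair_toBlocks₁₁ hsym h12 hs12, Matrix.fromBlocks_toBlocks]
    _ = 2 + (signedAdj (contractSpecialPath G v₁ v₂ v₃ h13)
          (contractSpecialPathSign G σ v₁ v₂ v₃)).rank := by
      rw [Matrix.rank_fromBlocks_antidiagNegOne, hschur]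
    _ = _ := add_comm _ _

open Classical in
theorem nullity_invariant_under_special_path_contraction
    {V : Type*} [Fintype V] (G : SimpleGraph V) (σ : V → V → ℝ)
    (hsym : ∀ u v, σ u v = σ v u)
    (hsgn : ∀ u v, G.Adj u v → σ u v = 1 ∨ σ u v = -1)
    (v₁ v₂ v₃ : V)
    (h12 : G.Adj v₁ v₂) (h23 : G.Adj v₂ v₃) (h13ne : v₁ ≠ v₃)
    (hdeg : G.neighborSet v₂ = {v₁, v₃})
    (h13 : ¬ G.Adj v₁ v₃)
    (hcommon : ∀ w : V, w ≠ v₂ → ¬ (G.Adj v₁ w ∧ G.Adj v₃ w))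
    (hs12 : σ v₁ v₂ = -1) (hs23 : σ v₂ v₃ = 1) :
    (signedAdj G σ).rank =
      (signedAdj (contractSpecialPath G v₁ v₂ v₃ h13)
        (fun a b =>
          if a.1 = v₃ ∧ G.Adj v₁ b.1 then σ v₁ b.1
          else if b.1 = v₃ ∧ G.Adj v₁ a.1 then σ v₁ a.1
          else σ a.1 b.1)).rank + 2 :=
  nullity_invariant_under_special_path_contraction_general G σ hsym v₁ v₂ v₃ h12 hdeg h13 hcommon
    hs12 hs23
end

section
/- Let B be a signed graph of order n whose underlying graph is bicyclic (connected with exactly n + 1 edges). If B contains a special path, then η(B) ≤ n − 4, i.e. rank(A(B)) ≥ 4. -/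
/-! A special path `v₁v₂v₃` extends to an induced path on four vertices: a bicyclic graph has
more edges than vertices, hence at least four vertices, so by connectivity some edge leaves
`{v₁, v₂, v₃}`. It cannot leave from `v₂`, and the special-path conditions make its endpoint
together with the path induce a `P₄`. The principal submatrix of `A(Γ)` on an induced `P₄` has
determinant `σ₁₂σ₂₁σ₃₄σ₄₃ ≠ 0`, so `rank A(Γ) ≥ 4`. -/

lemma Matrix.card_le_rank_of_det_submatrix_ne_zero {m R : Type*} [Fintype m] [CommRing R]
    [IsDomain R] {k : ℕ} (A : Matrix m m R) (f : Fin k → m) (h : (A.submatrix f f).det ≠ 0) :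
    k ≤ A.rank := by
  classical
  simpa [Matrix.rank_of_det_ne_zero h] using A.rank_submatrix_le f f

lemma Matrix.det_tridiagonal_fin_four {R : Type*} [CommRing R] (p q r s t u : R) :
    !![0, p, 0, 0; q, 0, r, 0; 0, s, 0, t; 0, 0, u, 0].det = p * q * (t * u) := by
  simp [Matrix.det_succ_row_zero, Fin.sum_univ_succ, Fin.succAbove, mul_assoc]

structure SimpleGraph.IsInducedPath4 {V : Type*} (G : SimpleGraph V) (a b c d : V) : Prop where
  adj_ab : G.Adj a b
  adj_bc : G.Adj b c
  adj_cd : G.Adj c d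
  not_adj_ac : ¬ G.Adj a c
  not_adj_ad : ¬ G.Adj a d
  not_adj_bd : ¬ G.Adj b d

lemma signedAdj_submatrix_of_isInducedPath4 {V : Type*} {G : SimpleGraph V} {σ : V → V → ℝ}
    {a b c d : V} (h : G.IsInducedPath4 a b c d) :
    (signedAdj G σ).submatrix ![a, b, c, d] ![a, b, c, d] =
      !![0, σ a b, 0, 0; σ b a, 0, σ b c, 0; 0, σ c b, 0, σ c d; 0, 0, σ d c, 0] := by
  obtain ⟨hab, hbc, hcd, hac, had, hbd⟩ := h
  ext i j
  fin_cases i <;> fin_cases j <;>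
    simp [signedAdj, hab, hbc, hcd, hac, had, hbd, hab.symm, hbc.symm, hcd.symm, G.adj_comm d,
      G.adj_comm c a]

lemma four_le_rank_signedAdj_of_isInducedPath4 {V : Type*} [Fintype V] {G : SimpleGraph V}
    {σ : V → V → ℝ} (hσ : ∀ u v, G.Adj u v → σ u v ≠ 0) {a b c d : V}
    (h : G.IsInducedPath4 a b c d) : 4 ≤ (signedAdj G σ).rank := by
  refine (signedAdj G σ).card_le_rank_of_det_submatrix_ne_zero ![a, b, c, d] ?_
  rw [signedAdj_submatrix_of_isInducedPath4 h, Matrix.det_tridiagonal_fin_four]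
  exact mul_ne_zero (mul_ne_zero (hσ _ _ h.adj_ab) (hσ _ _ h.adj_ab.symm))
    (mul_ne_zero (hσ _ _ h.adj_cd) (hσ _ _ h.adj_cd.symm))

lemma SimpleGraph.four_le_card_of_card_lt_ncard_edgeSet {V : Type*} [Fintype V]
    (G : SimpleGraph V) (h : Fintype.card V < G.edgeSet.ncard) : 4 ≤ Fintype.card V := by
  classical
  have hle : G.edgeSet.ncard ≤ (Fintype.card V).choose 2 := by
    rw [← SimpleGraph.coe_edgeFinset, Set.ncard_coe_finset]
    exact G.card_edgeFinset_le_card_choose_two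
  by_contra! hlt
  interval_cases n : Fintype.card V <;> rw [Nat.choose_two_right] at hle <;> omega

lemma SimpleGraph.Connected.exists_isInducedPath4_of_special_path {V : Type*} [Fintype V]
    {G : SimpleGraph V} (hconn : G.Connected) (hcard : 3 < Fintype.card V) {v₁ v₂ v₃ : V}
    (h12 : G.Adj v₁ v₂) (h23 : G.Adj v₂ v₃) (hnbr : G.neighborSet v₂ ⊆ {v₁, v₃})
    (h13 : ¬ G.Adj v₁ v₃) (hcom : ∀ w, w ≠ v₂ → ¬ (G.Adj v₁ w ∧ G.Adj v₃ w)) :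
    ∃ a b c d, G.IsInducedPath4 a b c d := by
  classical
  set S : Finset V := {v₁, v₂, v₃}
  obtain ⟨w, -, hw⟩ : ∃ w ∈ Finset.univ, w ∉ S :=
    Finset.exists_mem_notMem_of_card_lt_card (Finset.card_le_three.trans_lt hcard)
  obtain ⟨⟨⟨x, y⟩, hxy⟩, -, hx, hy⟩ :=
    (hconn.preconnected v₂ w).some.exists_boundary_dart S (by simp [S]) hw
  simp only [Finset.coe_insert, Finset.coe_singleton, Set.mem_insert_iff,
    Set.mem_singleton_iff, not_or, S] at hx hy
  obtain ⟨hy1, hy2, hy3⟩ := hy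
  have h2y : ¬ G.Adj v₂ y := fun h => by simpa [hy1, hy3] using hnbr h
  rcases hx with rfl | rfl | rfl
  · exact ⟨y, x, v₂, v₃, hxy.symm, h12, h23, fun h => h2y h.symm,
      fun h => hcom y hy2 ⟨hxy, h.symm⟩, h13⟩
  · exact absurd hxy h2y
  · exact ⟨v₁, v₂, x, y, h12, h23, hxy, h13, fun h => hcom y hy2 ⟨h, hxy⟩, h2y⟩

theorem rank_ge_four_of_bicyclic_with_special_path_general
    {V : Type*} [Fintype V] (G : SimpleGraph V) (σ : V → V → ℝ)
    (hsgn : ∀ u v, G.Adj u v → σ u v = 1 ∨ σ u v = -1)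
    (hconn : G.Connected)
    (hbic : G.edgeSet.ncard = Fintype.card V + 1)
    (hsp : ∃ v₁ v₂ v₃ : V, G.Adj v₁ v₂ ∧ G.Adj v₂ v₃ ∧ v₁ ≠ v₃ ∧
      G.neighborSet v₂ = {v₁, v₃} ∧ ¬ G.Adj v₁ v₃ ∧
      ∀ w : V, w ≠ v₂ → ¬ (G.Adj v₁ w ∧ G.Adj v₃ w)) :
    4 ≤ (signedAdj G σ).rank := by
  obtain ⟨v₁, v₂, v₃, h12, h23, -, hnbr, h13, hcom⟩ := hsp
  have hσ : ∀ u v, G.Adj u v → σ u v ≠ 0 := fun u v huv => by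
    rcases hsgn u v huv with h | h <;> norm_num [h]
  have hcard : 4 ≤ Fintype.card V := G.four_le_card_of_card_lt_ncard_edgeSet (by omega)
  obtain ⟨a, b, c, d, hpath⟩ :=
    hconn.exists_isInducedPath4_of_special_path hcard h12 h23 hnbr.le h13 hcom
  exact four_le_rank_signedAdj_of_isInducedPath4 hσ hpath

/-- A bicyclic signed graph (connected with `|E| = |V| + 1`) containing a
special path has nullity at most `n - 4`, i.e. `rank A(B) ≥ 4`. -/
theorem rank_ge_four_of_bicyclic_with_special_path
    {V : Type*} [Fintype V] (G : SimpleGraph V) (σ : V → V → ℝ)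
    (hsym : ∀ u v, σ u v = σ v u)
    (hsgn : ∀ u v, G.Adj u v → σ u v = 1 ∨ σ u v = -1)
    (hconn : G.Connected)
    (hbic : G.edgeSet.ncard = Fintype.card V + 1)
    (hsp : ∃ v₁ v₂ v₃ : V, G.Adj v₁ v₂ ∧ G.Adj v₂ v₃ ∧ v₁ ≠ v₃ ∧
      G.neighborSet v₂ = {v₁, v₃} ∧ ¬ G.Adj v₁ v₃ ∧
      ∀ w : V, w ≠ v₂ → ¬ (G.Adj v₁ w ∧ G.Adj v₃ w)) :
    4 ≤ (signedAdj G σ).rank :=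
  rank_ge_four_of_bicyclic_with_special_path_general G σ hsgn hconn hbic hsp
end
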